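/- arXiv:0812.4518 — 2 statements merged into one kernel-verified Lean document; each statement's English description precedes it below -/
import Mathlib

section
/- The map h is an isometry of L generating, together with g, the dihedral group of order 10: (i) B(h x, h y) = B(x, y) for all x, y ∈ V; (ii) h(L) = L; (iii) h ∘ h = id; (iv) h ∘ g ∘ h = g⁻¹ (equivalently h ∘ g ∘ h = g⁴); and (v) the subgroup of linear automorphisms of V generated by g and h is isomorphic to the dihedral group DihedralGroup 5 of order 10. -/
set_option maxHeartbeats 1000000


noncomputable section

abbrev V : Type := Fin 4 → Fin 4 → ℚ

/-- The `A₄` Cartan matrix. -/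
def CartanA4 : Matrix (Fin 4) (Fin 4) ℤ :=
  Matrix.of fun i k =>
    if i = k then 2 else if i.val + 1 = k.val ∨ k.val + 1 = i.val then -1 else 0

/-- The bilinear form of the lattice `A₄(-2)^{⊕ 4}` on `V`. -/
def B (x y : V) : ℚ :=
  -2 * ∑ j : Fin 4, ∑ i : Fin 4, ∑ k : Fin 4, x j i * (CartanA4 i k : ℚ) * y j k

/-- The standard basis vector `a_{j,i}` (the `i`-th simple root of the `j`-th copy of `A₄`). -/
def a (j i : Fin 4) : V := fun j' i' => if j' = j ∧ i' = i then 1 else 0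

/-- The subgroup `N ⊆ V` of integer-valued vectors, i.e. the lattice `A₄(-2)^{⊕ 4}`. -/
def N : AddSubgroup V :=
  AddSubgroup.pi Set.univ fun _ => AddSubgroup.pi Set.univ fun _ => (Int.castAddHom ℚ).range

/-- The map acting as `γ : α₁ ↦ α₂ ↦ α₃ ↦ α₄ ↦ -(α₁+α₂+α₃+α₄)` on each copy of `A₄`. -/
def g (x : V) : V := fun j => ![-(x j 3), x j 0 - x j 3, x j 1 - x j 3, x j 2 - x j 3]

def μ : V := (1/2 : ℚ) • (a 0 0 + a 1 0 + a 2 0 + a 3 0)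

def ν : V := (1/2 : ℚ) • (a 1 0 + a 2 2 + a 2 3 + a 3 0 + a 3 2 + a 3 3)

/-- The overlattice `L` generated by `N` and the vectors `gⁱ(μ)`, `gⁱ(ν)`, `i = 0,1,2,3`. -/
def L : AddSubgroup V :=
  N ⊔ AddSubgroup.closure {x : V | ∃ i : Fin 4, x = g^[(i : ℕ)] μ ∨ x = g^[(i : ℕ)] ν}

def e : Fin 8 → V :=
  ![μ, g^[2] μ + g^[3] μ, ν, μ + g^[2] μ + g^[3] μ - g^[2] ν - g^[3] ν,
    a 0 0, a 0 2 + a 0 3, a 1 0, a 1 2 + a 1 3]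

def f : Fin 8 → V := fun i => g (e i)

/-- The involution `h`, acting on each copy of `A₄` by `a₁ ↦ -a₁`, `a₂ ↦ a₁+a₂+a₃+a₄`,
`a₃ ↦ -a₄`, `a₄ ↦ -a₃`. -/
def h (x : V) : V := fun j => ![x j 1 - x j 0, x j 1, x j 1 - x j 3, x j 1 - x j 2]

/-- `g` as a linear automorphism of `V`. -/
def gEquiv : V ≃ₗ[ℚ] V where
  toFun := g
  invFun := g ∘ g ∘ g ∘ g
  map_add' x y := by
    funext j i
    fin_cases i <;> simp [g] <;> ring
  map_smul' c x := by
    funext j i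
    fin_cases i <;> simp [g] <;> ring
  left_inv x := by
    funext j i
    fin_cases i <;> simp [g, Function.comp] <;> ring
  right_inv x := by
    funext j i
    fin_cases i <;> simp [g, Function.comp] <;> ring

/-- `h` as a linear automorphism of `V`. -/
def hEquiv : V ≃ₗ[ℚ] V where
  toFun := h
  invFun := h
  map_add' x y := by
    funext j i
    fin_cases i <;> simp [h] <;> ring
  map_smul' c x := by
    funext j i
    fin_cases i <;> simp [h] <;> ring
  left_inv x := by
    funext j i
    fin_cases i <;> simp [h] <;> ring
  right_inv x := by
    funext j i
    fin_cases i <;> simp [h] <;> ring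


-- ===== auxiliary lemmas =====

lemma mulApply (e₁ e₂ : V ≃ₗ[ℚ] V) (x : V) : (e₁ * e₂) x = e₁ (e₂ x) := rfl

lemma gEquiv_apply (x : V) : gEquiv x = g x := rfl
lemma hEquiv_apply (x : V) : hEquiv x = h x := rfl

lemma h_h (x : V) : h (h x) = x := by
  funext j i; fin_cases i <;> simp [h] <;> ring

lemma mem_N_of_int {x : V} (hx : ∀ j i : Fin 4, ∃ n : ℤ, x j i = n) : x ∈ N := by
  simp only [N, AddSubgroup.mem_pi, Set.mem_univ, forall_true_left, AddMonoidHom.mem_range,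
    Int.coe_castAddHom, true_implies]
  intro j i
  obtain ⟨n, hn⟩ := hx j i
  exact ⟨n, hn.symm⟩

lemma int_of_mem_N {x : V} (hx : x ∈ N) : ∀ j i : Fin 4, ∃ n : ℤ, x j i = n := by
  simp only [N, AddSubgroup.mem_pi, Set.mem_univ, forall_true_left, AddMonoidHom.mem_range,
    Int.coe_castAddHom, true_implies] at hx
  intro j i
  obtain ⟨n, hn⟩ := hx j i
  exact ⟨n, hn.symm⟩

lemma a_mem_N (j i : Fin 4) : a j i ∈ N := by
  apply mem_N_of_int
  intro j' i'
  by_cases hc : j' = j ∧ i' = i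
  · exact ⟨1, by simp [a, hc]⟩
  · exact ⟨0, by simp [a, hc]⟩

lemma N_le_L : N ≤ L := le_sup_left

lemma a_mem_L (j i : Fin 4) : a j i ∈ L := N_le_L (a_mem_N j i)

lemma gen_mu_mem_L (i : Fin 4) : g^[(i : ℕ)] μ ∈ L :=
  (le_sup_right : _ ≤ L) (AddSubgroup.subset_closure ⟨i, Or.inl rfl⟩)

lemma gen_nu_mem_L (i : Fin 4) : g^[(i : ℕ)] ν ∈ L :=
  (le_sup_right : _ ≤ L) (AddSubgroup.subset_closure ⟨i, Or.inr rfl⟩)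

lemma mu_mem_L : μ ∈ L := gen_mu_mem_L 0
lemma g1mu_mem_L : g^[1] μ ∈ L := gen_mu_mem_L 1
lemma g2mu_mem_L : g^[2] μ ∈ L := gen_mu_mem_L 2
lemma g3mu_mem_L : g^[3] μ ∈ L := gen_mu_mem_L 3
lemma nu_mem_L : ν ∈ L := gen_nu_mem_L 0
lemma g1nu_mem_L : g^[1] ν ∈ L := gen_nu_mem_L 1
lemma g2nu_mem_L : g^[2] ν ∈ L := gen_nu_mem_L 2
lemma g3nu_mem_L : g^[3] ν ∈ L := gen_nu_mem_L 3

lemma h_mu : h μ = μ - (a 0 0 + a 1 0 + a 2 0 + a 3 0) := by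
  funext j i
  fin_cases j <;> fin_cases i <;>
    norm_num (config := { decide := true }) [h, g, μ, a, Matrix.vecHead, Matrix.vecTail, Pi.smul_apply, Pi.add_apply]

lemma h_g1mu : h (g^[1] μ) = μ + g^[1] μ + g^[2] μ + g^[3] μ := by
  funext j i
  fin_cases j <;> fin_cases i <;>
    norm_num (config := { decide := true }) [h, g, μ, a, Matrix.vecHead, Matrix.vecTail,
      Pi.smul_apply, Pi.add_apply, Function.iterate_succ, Function.iterate_zero] <;> simp <;> norm_num

lemma h_g2mu : h (g^[2] μ) = g^[3] μ - (a 0 3 + a 1 3 + a 2 3 + a 3 3) := by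
  funext j i
  fin_cases j <;> fin_cases i <;>
    norm_num (config := { decide := true }) [h, g, μ, a, Matrix.vecHead, Matrix.vecTail,
      Pi.smul_apply, Pi.add_apply, Function.iterate_succ, Function.iterate_zero] <;> simp <;> norm_num

lemma h_g3mu : h (g^[3] μ) = g^[2] μ - (a 0 2 + a 1 2 + a 2 2 + a 3 2) := by
  funext j i
  fin_cases j <;> fin_cases i <;>
    norm_num (config := { decide := true }) [h, g, μ, a, Matrix.vecHead, Matrix.vecTail,
      Pi.smul_apply, Pi.add_apply, Function.iterate_succ, Function.iterate_zero] <;> simp <;> norm_num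

lemma h_nu : h ν = ν - (a 1 0 + a 2 2 + a 2 3 + a 3 0 + a 3 2 + a 3 3) := by
  funext j i
  fin_cases j <;> fin_cases i <;>
    norm_num (config := { decide := true }) [h, g, ν, a, Matrix.vecHead, Matrix.vecTail, Pi.smul_apply, Pi.add_apply]

lemma h_g1nu : h (g^[1] ν) = ν + g^[1] ν + g^[2] ν + g^[3] ν := by
  funext j i
  fin_cases j <;> fin_cases i <;>
    norm_num (config := { decide := true }) [h, g, ν, a, Matrix.vecHead, Matrix.vecTail,
      Pi.smul_apply, Pi.add_apply, Function.iterate_succ, Function.iterate_zero] <;> simp <;> norm_num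

lemma h_g2nu : h (g^[2] ν) = g^[3] ν - (a 1 3 + a 2 0 + a 2 1 + a 3 0 + a 3 1 + a 3 3) := by
  funext j i
  fin_cases j <;> fin_cases i <;>
    norm_num (config := { decide := true }) [h, g, ν, a, Matrix.vecHead, Matrix.vecTail,
      Pi.smul_apply, Pi.add_apply, Function.iterate_succ, Function.iterate_zero] <;> simp <;> norm_num

lemma h_g3nu :
    h (g^[3] ν) = g^[2] ν - a 1 2 + (a 2 1 + a 2 2 + a 2 3 + a 3 1 + a 3 3) := by
  funext j i
  fin_cases j <;> fin_cases i <;>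
    norm_num (config := { decide := true }) [h, g, ν, a, Matrix.vecHead, Matrix.vecTail,
      Pi.smul_apply, Pi.add_apply, Function.iterate_succ, Function.iterate_zero] <;> simp <;> norm_num

lemma h_maps_L : ∀ x ∈ L, h x ∈ L := by
  have hle : L ≤ L.comap hEquiv.toLinearMap.toAddMonoidHom := by
    rw [L, sup_le_iff]
    constructor
    · intro x hx
      have hint := int_of_mem_N hx
      refine N_le_L (mem_N_of_int ?_)
      intro j i
      obtain ⟨n0, h0⟩ := hint j 0
      obtain ⟨n1, h1⟩ := hint j 1
      obtain ⟨n2, h2⟩ := hint j 2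
      obtain ⟨n3, h3⟩ := hint j 3
      have : hEquiv.toLinearMap.toAddMonoidHom x = h x := rfl
      rw [this]
      fin_cases i
      · exact ⟨n1 - n0, by simp [h, h0, h1]⟩
      · exact ⟨n1, by simp [h, h1]⟩
      · exact ⟨n1 - n3, by simp [h, h1, h3]⟩
      · exact ⟨n1 - n2, by simp [h, h1, h2]⟩
    · rw [AddSubgroup.closure_le]
      rintro s ⟨i, hi | hi⟩ <;> subst hi <;>
        simp only [AddSubgroup.coe_comap, Set.mem_preimage, SetLike.mem_coe,
          AddSubgroup.mem_comap] <;>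
        fin_cases i
      · show h μ ∈ L
        rw [h_mu]
        exact sub_mem mu_mem_L (add_mem (add_mem (add_mem (a_mem_L 0 0) (a_mem_L 1 0))
          (a_mem_L 2 0)) (a_mem_L 3 0))
      · show h (g^[1] μ) ∈ L
        rw [h_g1mu]
        exact add_mem (add_mem (add_mem mu_mem_L g1mu_mem_L) g2mu_mem_L) g3mu_mem_L
      · show h (g^[2] μ) ∈ L
        rw [h_g2mu]
        exact sub_mem g3mu_mem_L (add_mem (add_mem (add_mem (a_mem_L 0 3) (a_mem_L 1 3))
          (a_mem_L 2 3)) (a_mem_L 3 3))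
      · show h (g^[3] μ) ∈ L
        rw [h_g3mu]
        exact sub_mem g2mu_mem_L (add_mem (add_mem (add_mem (a_mem_L 0 2) (a_mem_L 1 2))
          (a_mem_L 2 2)) (a_mem_L 3 2))
      · show h ν ∈ L
        rw [h_nu]
        exact sub_mem nu_mem_L (add_mem (add_mem (add_mem (add_mem (add_mem
          (a_mem_L 1 0) (a_mem_L 2 2)) (a_mem_L 2 3)) (a_mem_L 3 0)) (a_mem_L 3 2))
          (a_mem_L 3 3))
      · show h (g^[1] ν) ∈ L
        rw [h_g1nu]
        exact add_mem (add_mem (add_mem nu_mem_L g1nu_mem_L) g2nu_mem_L) g3nu_mem_L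
      · show h (g^[2] ν) ∈ L
        rw [h_g2nu]
        exact sub_mem g3nu_mem_L (add_mem (add_mem (add_mem (add_mem (add_mem
          (a_mem_L 1 3) (a_mem_L 2 0)) (a_mem_L 2 1)) (a_mem_L 3 0)) (a_mem_L 3 1))
          (a_mem_L 3 3))
      · show h (g^[3] ν) ∈ L
        rw [h_g3nu]
        exact add_mem (sub_mem g2nu_mem_L (a_mem_L 1 2)) (add_mem (add_mem (add_mem
          (add_mem (a_mem_L 2 1) (a_mem_L 2 2)) (a_mem_L 2 3)) (a_mem_L 3 1))
          (a_mem_L 3 3))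
  intro x hx
  exact hle hx

lemma G5 : gEquiv ^ 5 = 1 := by
  apply LinearEquiv.ext
  intro x
  rw [LinearEquiv.pow_apply]
  show g (g (g (g (g x)))) = x
  funext j i
  fin_cases i <;> simp [g] <;> ring

lemma H2 : hEquiv * hEquiv = 1 := by
  apply LinearEquiv.ext
  intro x
  show h (h x) = x
  exact h_h x

lemma powG (n : ℕ) : gEquiv ^ n = gEquiv ^ (n % 5) := by
  conv_lhs => rw [← Nat.div_add_mod n 5]
  rw [pow_add, pow_mul, G5, one_pow, one_mul]

/-- `gEquiv` to a `ZMod 5` power. -/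
def Gz (i : ZMod 5) : V ≃ₗ[ℚ] V := gEquiv ^ (i.val)

lemma Gz_add (i j : ZMod 5) : Gz (i + j) = Gz i * Gz j := by
  rw [Gz, Gz, Gz, ZMod.val_add, ← powG, pow_add]

lemma coe_gEquiv : ⇑gEquiv = g := rfl
lemma coe_hEquiv : ⇑hEquiv = h := rfl

lemma GH1 : gEquiv ^ 1 * hEquiv = hEquiv * gEquiv ^ 4 := by
  apply LinearEquiv.ext
  intro x
  rw [mulApply, mulApply, LinearEquiv.pow_apply, LinearEquiv.pow_apply,
    coe_gEquiv, coe_hEquiv]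
  funext j i
  fin_cases i <;>
    simp [g, h, Function.iterate_succ, Function.iterate_zero] <;> ring

lemma GH2 : gEquiv ^ 2 * hEquiv = hEquiv * gEquiv ^ 3 := by
  apply LinearEquiv.ext
  intro x
  rw [mulApply, mulApply, LinearEquiv.pow_apply, LinearEquiv.pow_apply,
    coe_gEquiv, coe_hEquiv]
  funext j i
  fin_cases i <;>
    simp [g, h, Function.iterate_succ, Function.iterate_zero] <;> ring

lemma GH3 : gEquiv ^ 3 * hEquiv = hEquiv * gEquiv ^ 2 := by
  apply LinearEquiv.ext
  intro x
  rw [mulApply, mulApply, LinearEquiv.pow_apply, LinearEquiv.pow_apply,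
    coe_gEquiv, coe_hEquiv]
  funext j i
  fin_cases i <;>
    simp [g, h, Function.iterate_succ, Function.iterate_zero] <;> ring

lemma GH4 : gEquiv ^ 4 * hEquiv = hEquiv * gEquiv ^ 1 := by
  apply LinearEquiv.ext
  intro x
  rw [mulApply, mulApply, LinearEquiv.pow_apply, LinearEquiv.pow_apply,
    coe_gEquiv, coe_hEquiv]
  funext j i
  fin_cases i <;>
    simp [g, h, Function.iterate_succ, Function.iterate_zero] <;> ring

lemma GH_swap : ∀ i : ZMod 5, Gz i * hEquiv = hEquiv * Gz (-i) := by
  intro i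
  fin_cases i
  · show gEquiv ^ 0 * hEquiv = hEquiv * gEquiv ^ 0
    rw [pow_zero, one_mul, mul_one]
  · exact GH1
  · exact GH2
  · exact GH3
  · exact GH4

/-- The homomorphism from the dihedral group of order 10. -/
def phi : DihedralGroup 5 →* (V ≃ₗ[ℚ] V) where
  toFun := fun x =>
    match x with
    | .r i => Gz i
    | .sr i => hEquiv * Gz i
  map_one' := by
    show Gz 0 = 1
    show gEquiv ^ 0 = 1
    rw [pow_zero]
  map_mul' := by
    rintro (i | i) (j | j)
    · show Gz (i + j) = Gz i * Gz j
      exact Gz_add i j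
    · show hEquiv * Gz (j - i) = Gz i * (hEquiv * Gz j)
      rw [← mul_assoc, GH_swap, mul_assoc, ← Gz_add]
      ring_nf
    · show hEquiv * Gz (i + j) = hEquiv * Gz i * Gz j
      rw [mul_assoc, ← Gz_add]
    · show Gz (j - i) = hEquiv * Gz i * (hEquiv * Gz j)
      rw [mul_assoc, ← mul_assoc (Gz i), GH_swap, ← mul_assoc, ← mul_assoc, H2,
        one_mul, ← Gz_add]
      ring_nf

lemma phi_injective : Function.Injective phi := by
  rw [injective_iff_map_eq_one]
  rintro (i | i) hyp
  · fin_cases i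
    · rfl
    · exfalso
      have hy : gEquiv ^ 1 = 1 := hyp
      have h2 : (gEquiv ^ 1) (a 0 0) = a 0 0 := by rw [hy]; rfl
      rw [LinearEquiv.pow_apply, coe_gEquiv] at h2
      have h3 := congrFun (congrFun h2 0) 0
      norm_num (config := { decide := true }) [g, a,
        Function.iterate_succ, Function.iterate_zero] at h3
    · exfalso
      have hy : gEquiv ^ 2 = 1 := hyp
      have h2 : (gEquiv ^ 2) (a 0 0) = a 0 0 := by rw [hy]; rfl
      rw [LinearEquiv.pow_apply, coe_gEquiv] at h2
      have h3 := congrFun (congrFun h2 0) 0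
      norm_num (config := { decide := true }) [g, a,
        Function.iterate_succ, Function.iterate_zero] at h3
    · exfalso
      have hy : gEquiv ^ 3 = 1 := hyp
      have h2 : (gEquiv ^ 3) (a 0 0) = a 0 0 := by rw [hy]; rfl
      rw [LinearEquiv.pow_apply, coe_gEquiv] at h2
      have h3 := congrFun (congrFun h2 0) 0
      norm_num (config := { decide := true }) [g, a,
        Function.iterate_succ, Function.iterate_zero] at h3
      simp at h3
    · exfalso
      have hy : gEquiv ^ 4 = 1 := hyp
      have h2 : (gEquiv ^ 4) (a 0 0) = a 0 0 := by rw [hy]; rfl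
      rw [LinearEquiv.pow_apply, coe_gEquiv] at h2
      have h3 := congrFun (congrFun h2 0) 0
      norm_num (config := { decide := true }) [g, a,
        Function.iterate_succ, Function.iterate_zero] at h3
      simp at h3
      norm_num at h3
  · exfalso
    fin_cases i
    · have hy : hEquiv * gEquiv ^ 0 = 1 := hyp
      have h2 : (hEquiv * gEquiv ^ 0) (a 0 0) = a 0 0 := by rw [hy]; rfl
      rw [mulApply, LinearEquiv.pow_apply, coe_gEquiv, coe_hEquiv] at h2
      have h3 := congrFun (congrFun h2 0) 0
      norm_num (config := { decide := true }) [g, h, a,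
        Function.iterate_succ, Function.iterate_zero] at h3
    · have hy : hEquiv * gEquiv ^ 1 = 1 := hyp
      have h2 : (hEquiv * gEquiv ^ 1) (a 0 0) = a 0 0 := by rw [hy]; rfl
      rw [mulApply, LinearEquiv.pow_apply, coe_gEquiv, coe_hEquiv] at h2
      have h3 := congrFun (congrFun h2 0) 1
      norm_num (config := { decide := true }) [g, h, a,
        Function.iterate_succ, Function.iterate_zero] at h3
    · have hy : hEquiv * gEquiv ^ 2 = 1 := hyp
      have h2 : (hEquiv * gEquiv ^ 2) (a 0 0) = a 0 0 := by rw [hy]; rfl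
      rw [mulApply, LinearEquiv.pow_apply, coe_gEquiv, coe_hEquiv] at h2
      have h3 := congrFun (congrFun h2 0) 0
      norm_num (config := { decide := true }) [g, h, a,
        Function.iterate_succ, Function.iterate_zero] at h3
    · have hy : hEquiv * gEquiv ^ 3 = 1 := hyp
      have h2 : (hEquiv * gEquiv ^ 3) (a 0 0) = a 0 0 := by rw [hy]; rfl
      rw [mulApply, LinearEquiv.pow_apply, coe_gEquiv, coe_hEquiv] at h2
      have h3 := congrFun (congrFun h2 0) 0
      norm_num (config := { decide := true }) [g, h, a,
        Function.iterate_succ, Function.iterate_zero] at h3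
    · have hy : hEquiv * gEquiv ^ 4 = 1 := hyp
      have h2 : (hEquiv * gEquiv ^ 4) (a 0 0) = a 0 0 := by rw [hy]; rfl
      rw [mulApply, LinearEquiv.pow_apply, coe_gEquiv, coe_hEquiv] at h2
      have h3 := congrFun (congrFun h2 0) 0
      norm_num (config := { decide := true }) [g, h, a,
        Function.iterate_succ, Function.iterate_zero] at h3
      simp at h3

lemma phi_range : phi.range = Subgroup.closure {gEquiv, hEquiv} := by
  apply le_antisymm
  · rintro x ⟨y, rfl⟩
    have hgm : gEquiv ∈ Subgroup.closure ({gEquiv, hEquiv} : Set (V ≃ₗ[ℚ] V)) :=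
      Subgroup.subset_closure (by simp)
    have hhm : hEquiv ∈ Subgroup.closure ({gEquiv, hEquiv} : Set (V ≃ₗ[ℚ] V)) :=
      Subgroup.subset_closure (by simp)
    cases y with
    | r i => exact pow_mem hgm _
    | sr i => exact mul_mem hhm (pow_mem hgm _)
  · rw [Subgroup.closure_le]
    rintro x hx
    rcases hx with rfl | rfl
    · refine ⟨.r 1, ?_⟩
      show gEquiv ^ (1 : ZMod 5).val = gEquiv
      rw [show (1 : ZMod 5).val = 1 from rfl, pow_one]
    · refine ⟨.sr 0, ?_⟩
      show hEquiv * gEquiv ^ (0 : ZMod 5).val = hEquiv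
      rw [show (0 : ZMod 5).val = 0 from rfl, pow_zero, mul_one]

-- ===== end auxiliary lemmas =====

/-- `h` is an isometry of `L` and together with `g` generates the dihedral group of
order `10`. -/
theorem stmt10 :
    (∀ x y : V, B (h x) (h y) = B x y) ∧
    h '' (L : Set V) = (L : Set V) ∧
    h ∘ h = id ∧
    h ∘ g ∘ h = g ∘ g ∘ g ∘ g ∧
    Nonempty ((Subgroup.closure {gEquiv, hEquiv} : Subgroup (V ≃ₗ[ℚ] V)) ≃* DihedralGroup 5) := by
  refine ⟨?_, ?_, ?_, ?_, ?_⟩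
  · intro x y
    simp only [B, Fin.sum_univ_four]
    norm_num (config := { decide := true }) [CartanA4, h]
    simp
    ring
  · apply Set.Subset.antisymm
    · rintro _ ⟨x, hx, rfl⟩
      exact h_maps_L x hx
    · intro x hx
      exact ⟨h x, h_maps_L x hx, h_h x⟩
  · funext x
    exact h_h x
  · funext x
    show h (g (h x)) = g (g (g (g x)))
    funext j i
    fin_cases i <;> simp [g, h] <;> ring
  · refine ⟨(MulEquiv.subgroupCongr phi_range.symm).trans
      (MonoidHom.ofInjective phi_injective).symm⟩

end
end

section
/- The involution h acts as minus the identity on the copy of E₈(−2) spanned by e₁, …, e₈ and as the identity on its orthogonal complement in L: h(eᵢ) = −eᵢ for all i = 1, …, 8, and for every x ∈ L with B(x, eᵢ) = 0 for all i = 1, …, 8 one has h(x) = x. -/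
noncomputable section

set_option maxHeartbeats 1000000
lemma fm0 : (⟨0, by omega⟩ : Fin 4) = 0 := rfl
lemma fm1 : (⟨1, by omega⟩ : Fin 4) = 1 := rfl
lemma fm2 : (⟨2, by omega⟩ : Fin 4) = 2 := rfl
lemma fm3 : (⟨3, by omega⟩ : Fin 4) = 3 := rfl
lemma fv0 : ((0 : Fin 4) : ℕ) = 0 := rfl
lemma fv1 : ((1 : Fin 4) : ℕ) = 1 := rfl
lemma fv2 : ((2 : Fin 4) : ℕ) = 2 := rfl
lemma fv3 : ((3 : Fin 4) : ℕ) = 3 := rfl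
lemma it2 (x : V) : g^[2] x = g (g x) := rfl
lemma it3 (x : V) : g^[3] x = g (g (g x)) := rfl
lemma μ_eq : μ = ![![1/2,0,0,0],![1/2,0,0,0],![1/2,0,0,0],![1/2,0,0,0]] := by
  funext j k; fin_cases j <;> fin_cases k <;> norm_num [μ, a, fm0, fm1, fm2, fm3, Fin.ext_iff, fv0, fv1, fv2, fv3, Matrix.vecHead, Matrix.vecTail, Matrix.cons_val_two, Matrix.cons_val_three]
lemma ν_eq : ν = ![![0,0,0,0],![1/2,0,0,0],![0,0,1/2,1/2],![1/2,0,1/2,1/2]] := by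
  funext j k; fin_cases j <;> fin_cases k <;> norm_num [ν, a, fm0, fm1, fm2, fm3, Fin.ext_iff, fv0, fv1, fv2, fv3, Matrix.vecHead, Matrix.vecTail, Matrix.cons_val_two, Matrix.cons_val_three]
lemma gμ_eq : g ![![1/2,0,0,0],![1/2,0,0,0],![1/2,0,0,0],![1/2,0,0,0]] = ![![0,1/2,0,0],![0,1/2,0,0],![0,1/2,0,0],![0,1/2,0,0]] := by
  funext j k; fin_cases j <;> fin_cases k <;> norm_num [g, fm0, fm1, fm2, fm3, Fin.ext_iff, fv0, fv1, fv2, fv3, Matrix.vecHead, Matrix.vecTail, Matrix.cons_val_two, Matrix.cons_val_three]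
lemma g2μ_eq : g ![![0,1/2,0,0],![0,1/2,0,0],![0,1/2,0,0],![0,1/2,0,0]] = ![![0,0,1/2,0],![0,0,1/2,0],![0,0,1/2,0],![0,0,1/2,0]] := by
  funext j k; fin_cases j <;> fin_cases k <;> norm_num [g, fm0, fm1, fm2, fm3, Fin.ext_iff, fv0, fv1, fv2, fv3, Matrix.vecHead, Matrix.vecTail, Matrix.cons_val_two, Matrix.cons_val_three]
lemma g3μ_eq : g ![![0,0,1/2,0],![0,0,1/2,0],![0,0,1/2,0],![0,0,1/2,0]] = ![![0,0,0,1/2],![0,0,0,1/2],![0,0,0,1/2],![0,0,0,1/2]] := by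
  funext j k; fin_cases j <;> fin_cases k <;> norm_num [g, fm0, fm1, fm2, fm3, Fin.ext_iff, fv0, fv1, fv2, fv3, Matrix.vecHead, Matrix.vecTail, Matrix.cons_val_two, Matrix.cons_val_three]
lemma gν_eq : g ![![0,0,0,0],![1/2,0,0,0],![0,0,1/2,1/2],![1/2,0,1/2,1/2]] = ![![0,0,0,0],![0,1/2,0,0],![-1/2,-1/2,-1/2,0],![-1/2,0,-1/2,0]] := by
  funext j k; fin_cases j <;> fin_cases k <;> norm_num [g, fm0, fm1, fm2, fm3, Fin.ext_iff, fv0, fv1, fv2, fv3, Matrix.vecHead, Matrix.vecTail, Matrix.cons_val_two, Matrix.cons_val_three]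
lemma g2ν_eq : g ![![0,0,0,0],![0,1/2,0,0],![-1/2,-1/2,-1/2,0],![-1/2,0,-1/2,0]] = ![![0,0,0,0],![0,0,1/2,0],![0,-1/2,-1/2,-1/2],![0,-1/2,0,-1/2]] := by
  funext j k; fin_cases j <;> fin_cases k <;> norm_num [g, fm0, fm1, fm2, fm3, Fin.ext_iff, fv0, fv1, fv2, fv3, Matrix.vecHead, Matrix.vecTail, Matrix.cons_val_two, Matrix.cons_val_three]
lemma g3ν_eq : g ![![0,0,0,0],![0,0,1/2,0],![0,-1/2,-1/2,-1/2],![0,-1/2,0,-1/2]] = ![![0,0,0,0],![0,0,0,1/2],![1/2,1/2,0,0],![1/2,1/2,0,1/2]] := by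
  funext j k; fin_cases j <;> fin_cases k <;> norm_num [g, fm0, fm1, fm2, fm3, Fin.ext_iff, fv0, fv1, fv2, fv3, Matrix.vecHead, Matrix.vecTail, Matrix.cons_val_two, Matrix.cons_val_three]
lemma a00_eq : a 0 0 = ![![1,0,0,0],![0,0,0,0],![0,0,0,0],![0,0,0,0]] := by
  funext j k; fin_cases j <;> fin_cases k <;> norm_num [a, fm0, fm1, fm2, fm3, Fin.ext_iff, fv0, fv1, fv2, fv3, Matrix.vecHead, Matrix.vecTail, Matrix.cons_val_two, Matrix.cons_val_three]
lemma a02_eq : a 0 2 = ![![0,0,1,0],![0,0,0,0],![0,0,0,0],![0,0,0,0]] := by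
  funext j k; fin_cases j <;> fin_cases k <;> norm_num [a, fm0, fm1, fm2, fm3, Fin.ext_iff, fv0, fv1, fv2, fv3, Matrix.vecHead, Matrix.vecTail, Matrix.cons_val_two, Matrix.cons_val_three]
lemma a03_eq : a 0 3 = ![![0,0,0,1],![0,0,0,0],![0,0,0,0],![0,0,0,0]] := by
  funext j k; fin_cases j <;> fin_cases k <;> norm_num [a, fm0, fm1, fm2, fm3, Fin.ext_iff, fv0, fv1, fv2, fv3, Matrix.vecHead, Matrix.vecTail, Matrix.cons_val_two, Matrix.cons_val_three]
lemma a10_eq : a 1 0 = ![![0,0,0,0],![1,0,0,0],![0,0,0,0],![0,0,0,0]] := by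
  funext j k; fin_cases j <;> fin_cases k <;> norm_num [a, fm0, fm1, fm2, fm3, Fin.ext_iff, fv0, fv1, fv2, fv3, Matrix.vecHead, Matrix.vecTail, Matrix.cons_val_two, Matrix.cons_val_three]
lemma a12_eq : a 1 2 = ![![0,0,0,0],![0,0,1,0],![0,0,0,0],![0,0,0,0]] := by
  funext j k; fin_cases j <;> fin_cases k <;> norm_num [a, fm0, fm1, fm2, fm3, Fin.ext_iff, fv0, fv1, fv2, fv3, Matrix.vecHead, Matrix.vecTail, Matrix.cons_val_two, Matrix.cons_val_three]
lemma a13_eq : a 1 3 = ![![0,0,0,0],![0,0,0,1],![0,0,0,0],![0,0,0,0]] := by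
  funext j k; fin_cases j <;> fin_cases k <;> norm_num [a, fm0, fm1, fm2, fm3, Fin.ext_iff, fv0, fv1, fv2, fv3, Matrix.vecHead, Matrix.vecTail, Matrix.cons_val_two, Matrix.cons_val_three]
lemma E0 : e 0 = ![![1/2,0,0,0],![1/2,0,0,0],![1/2,0,0,0],![1/2,0,0,0]] := by
  show (μ : V) = _
  simp only [it2, it3, μ_eq, ν_eq, gμ_eq, g2μ_eq, g3μ_eq, gν_eq, g2ν_eq, g3ν_eq, a00_eq, a02_eq, a03_eq, a10_eq, a12_eq, a13_eq]
lemma E1 : e 1 = ![![0,0,1/2,1/2],![0,0,1/2,1/2],![0,0,1/2,1/2],![0,0,1/2,1/2]] := by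
  show (g^[2] μ + g^[3] μ : V) = _
  simp only [it2, it3, μ_eq, ν_eq, gμ_eq, g2μ_eq, g3μ_eq, gν_eq, g2ν_eq, g3ν_eq, a00_eq, a02_eq, a03_eq, a10_eq, a12_eq, a13_eq]
  funext j k; fin_cases j <;> fin_cases k <;> norm_num [fm0, fm1, fm2, fm3, Fin.ext_iff, fv0, fv1, fv2, fv3, Matrix.vecHead, Matrix.vecTail, Matrix.cons_val_two, Matrix.cons_val_three]
lemma E2 : e 2 = ![![0,0,0,0],![1/2,0,0,0],![0,0,1/2,1/2],![1/2,0,1/2,1/2]] := by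
  show (ν : V) = _
  simp only [it2, it3, μ_eq, ν_eq, gμ_eq, g2μ_eq, g3μ_eq, gν_eq, g2ν_eq, g3ν_eq, a00_eq, a02_eq, a03_eq, a10_eq, a12_eq, a13_eq]
lemma E3 : e 3 = ![![1/2,0,1/2,1/2],![1/2,0,0,0],![0,0,1,1],![0,0,1/2,1/2]] := by
  show (μ + g^[2] μ + g^[3] μ - g^[2] ν - g^[3] ν : V) = _
  simp only [it2, it3, μ_eq, ν_eq, gμ_eq, g2μ_eq, g3μ_eq, gν_eq, g2ν_eq, g3ν_eq, a00_eq, a02_eq, a03_eq, a10_eq, a12_eq, a13_eq]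
  funext j k; fin_cases j <;> fin_cases k <;> norm_num [fm0, fm1, fm2, fm3, Fin.ext_iff, fv0, fv1, fv2, fv3, Matrix.vecHead, Matrix.vecTail, Matrix.cons_val_two, Matrix.cons_val_three]
lemma E4 : e 4 = ![![1,0,0,0],![0,0,0,0],![0,0,0,0],![0,0,0,0]] := by
  show (a 0 0 : V) = _
  simp only [it2, it3, μ_eq, ν_eq, gμ_eq, g2μ_eq, g3μ_eq, gν_eq, g2ν_eq, g3ν_eq, a00_eq, a02_eq, a03_eq, a10_eq, a12_eq, a13_eq]
lemma E5 : e 5 = ![![0,0,1,1],![0,0,0,0],![0,0,0,0],![0,0,0,0]] := by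
  show (a 0 2 + a 0 3 : V) = _
  simp only [it2, it3, μ_eq, ν_eq, gμ_eq, g2μ_eq, g3μ_eq, gν_eq, g2ν_eq, g3ν_eq, a00_eq, a02_eq, a03_eq, a10_eq, a12_eq, a13_eq]
  funext j k; fin_cases j <;> fin_cases k <;> norm_num [fm0, fm1, fm2, fm3, Fin.ext_iff, fv0, fv1, fv2, fv3, Matrix.vecHead, Matrix.vecTail, Matrix.cons_val_two, Matrix.cons_val_three]
lemma E6 : e 6 = ![![0,0,0,0],![1,0,0,0],![0,0,0,0],![0,0,0,0]] := by
  show (a 1 0 : V) = _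
  simp only [it2, it3, μ_eq, ν_eq, gμ_eq, g2μ_eq, g3μ_eq, gν_eq, g2ν_eq, g3ν_eq, a00_eq, a02_eq, a03_eq, a10_eq, a12_eq, a13_eq]
lemma E7 : e 7 = ![![0,0,0,0],![0,0,1,1],![0,0,0,0],![0,0,0,0]] := by
  show (a 1 2 + a 1 3 : V) = _
  simp only [it2, it3, μ_eq, ν_eq, gμ_eq, g2μ_eq, g3μ_eq, gν_eq, g2ν_eq, g3ν_eq, a00_eq, a02_eq, a03_eq, a10_eq, a12_eq, a13_eq]
  funext j k; fin_cases j <;> fin_cases k <;> norm_num [fm0, fm1, fm2, fm3, Fin.ext_iff, fv0, fv1, fv2, fv3, Matrix.vecHead, Matrix.vecTail, Matrix.cons_val_two, Matrix.cons_val_three]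
lemma he0 : h (e 0) = -(e 0) := by
  rw [E0]; funext j k; fin_cases j <;> fin_cases k <;> norm_num [h, fm0, fm1, fm2, fm3, Fin.ext_iff, fv0, fv1, fv2, fv3, Matrix.vecHead, Matrix.vecTail, Matrix.cons_val_two, Matrix.cons_val_three]
lemma he1 : h (e 1) = -(e 1) := by
  rw [E1]; funext j k; fin_cases j <;> fin_cases k <;> norm_num [h, fm0, fm1, fm2, fm3, Fin.ext_iff, fv0, fv1, fv2, fv3, Matrix.vecHead, Matrix.vecTail, Matrix.cons_val_two, Matrix.cons_val_three]
lemma he2 : h (e 2) = -(e 2) := by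
  rw [E2]; funext j k; fin_cases j <;> fin_cases k <;> norm_num [h, fm0, fm1, fm2, fm3, Fin.ext_iff, fv0, fv1, fv2, fv3, Matrix.vecHead, Matrix.vecTail, Matrix.cons_val_two, Matrix.cons_val_three]
lemma he3 : h (e 3) = -(e 3) := by
  rw [E3]; funext j k; fin_cases j <;> fin_cases k <;> norm_num [h, fm0, fm1, fm2, fm3, Fin.ext_iff, fv0, fv1, fv2, fv3, Matrix.vecHead, Matrix.vecTail, Matrix.cons_val_two, Matrix.cons_val_three]
lemma he4 : h (e 4) = -(e 4) := by
  rw [E4]; funext j k; fin_cases j <;> fin_cases k <;> norm_num [h, fm0, fm1, fm2, fm3, Fin.ext_iff, fv0, fv1, fv2, fv3, Matrix.vecHead, Matrix.vecTail, Matrix.cons_val_two, Matrix.cons_val_three]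
lemma he5 : h (e 5) = -(e 5) := by
  rw [E5]; funext j k; fin_cases j <;> fin_cases k <;> norm_num [h, fm0, fm1, fm2, fm3, Fin.ext_iff, fv0, fv1, fv2, fv3, Matrix.vecHead, Matrix.vecTail, Matrix.cons_val_two, Matrix.cons_val_three]
lemma he6 : h (e 6) = -(e 6) := by
  rw [E6]; funext j k; fin_cases j <;> fin_cases k <;> norm_num [h, fm0, fm1, fm2, fm3, Fin.ext_iff, fv0, fv1, fv2, fv3, Matrix.vecHead, Matrix.vecTail, Matrix.cons_val_two, Matrix.cons_val_three]
lemma he7 : h (e 7) = -(e 7) := by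
  rw [E7]; funext j k; fin_cases j <;> fin_cases k <;> norm_num [h, fm0, fm1, fm2, fm3, Fin.ext_iff, fv0, fv1, fv2, fv3, Matrix.vecHead, Matrix.vecTail, Matrix.cons_val_two, Matrix.cons_val_three]

/-- The involution `h` acts as `-1` on the copy of `E₈(-2)` spanned by `e₁, …, e₈` and as the
identity on its orthogonal complement in `L`. -/
theorem stmt11 :
    (∀ i : Fin 8, h (e i) = -(e i)) ∧
    ∀ x ∈ L, (∀ i : Fin 8, B x (e i) = 0) → h x = x := by
  constructor
  · intro i; fin_cases i
    exacts [he0, he1, he2, he3, he4, he5, he6, he7]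
  · intro x _ hB
    have h0 : (-2:ℚ) * x 0 0 + (1:ℚ) * x 0 1 + (-2:ℚ) * x 1 0 + (1:ℚ) * x 1 1 + (-2:ℚ) * x 2 0 + (1:ℚ) * x 2 1 + (-2:ℚ) * x 3 0 + (1:ℚ) * x 3 1 = 0 := by
      have t := hB 0; rw [E0] at t
      simp [B, CartanA4, Fin.sum_univ_four] at t
      linear_combination (-2 : ℚ) * t
    have h1 : (1:ℚ) * x 0 1 + (-1:ℚ) * x 0 2 + (-1:ℚ) * x 0 3 + (1:ℚ) * x 1 1 + (-1:ℚ) * x 1 2 + (-1:ℚ) * x 1 3 + (1:ℚ) * x 2 1 + (-1:ℚ) * x 2 2 + (-1:ℚ) * x 2 3 + (1:ℚ) * x 3 1 + (-1:ℚ) * x 3 2 + (-1:ℚ) * x 3 3 = 0 := by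
      have t := hB 1; rw [E1] at t
      simp [B, CartanA4, Fin.sum_univ_four] at t
      linear_combination (-2 : ℚ) * t
    have h2 : (-2:ℚ) * x 1 0 + (1:ℚ) * x 1 1 + (1:ℚ) * x 2 1 + (-1:ℚ) * x 2 2 + (-1:ℚ) * x 2 3 + (-2:ℚ) * x 3 0 + (2:ℚ) * x 3 1 + (-1:ℚ) * x 3 2 + (-1:ℚ) * x 3 3 = 0 := by
      have t := hB 2; rw [E2] at t
      simp [B, CartanA4, Fin.sum_univ_four] at t
      linear_combination (-2 : ℚ) * t
    have h3 : (-2:ℚ) * x 0 0 + (2:ℚ) * x 0 1 + (-1:ℚ) * x 0 2 + (-1:ℚ) * x 0 3 + (-2:ℚ) * x 1 0 + (1:ℚ) * x 1 1 + (2:ℚ) * x 2 1 + (-2:ℚ) * x 2 2 + (-2:ℚ) * x 2 3 + (1:ℚ) * x 3 1 + (-1:ℚ) * x 3 2 + (-1:ℚ) * x 3 3 = 0 := by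
      have t := hB 3; rw [E3] at t
      simp [B, CartanA4, Fin.sum_univ_four] at t
      linear_combination (-2 : ℚ) * t
    have h4 : (-4:ℚ) * x 0 0 + (2:ℚ) * x 0 1 = 0 := by
      have t := hB 4; rw [E4] at t
      simp [B, CartanA4, Fin.sum_univ_four] at t
      linear_combination (-2 : ℚ) * t
    have h5 : (2:ℚ) * x 0 1 + (-2:ℚ) * x 0 2 + (-2:ℚ) * x 0 3 = 0 := by
      have t := hB 5; rw [E5] at t
      simp [B, CartanA4, Fin.sum_univ_four] at t
      linear_combination (-2 : ℚ) * t
    have h6 : (-4:ℚ) * x 1 0 + (2:ℚ) * x 1 1 = 0 := by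
      have t := hB 6; rw [E6] at t
      simp [B, CartanA4, Fin.sum_univ_four] at t
      linear_combination (-2 : ℚ) * t
    have h7 : (2:ℚ) * x 1 1 + (-2:ℚ) * x 1 2 + (-2:ℚ) * x 1 3 = 0 := by
      have t := hB 7; rw [E7] at t
      simp [B, CartanA4, Fin.sum_univ_four] at t
      linear_combination (-2 : ℚ) * t
    funext j k
    fin_cases j <;> fin_cases k <;> simp only [h, fm0, fm1, fm2, fm3, Fin.ext_iff, fv0, fv1, fv2, fv3, Matrix.vecHead, Matrix.vecTail, Matrix.cons_val] <;> norm_num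
    · linear_combination -((-1/2:ℚ) * h4)
    · linear_combination (1/2:ℚ) * h5
    · linear_combination (1/2:ℚ) * h5
    · linear_combination -((-1/2:ℚ) * h6)
    · linear_combination (1/2:ℚ) * h7
    · linear_combination (1/2:ℚ) * h7
    · linear_combination -((-1:ℚ) * h0 + (-1:ℚ) * h1 + (1:ℚ) * h2 + (1/2:ℚ) * h4 + (1/2:ℚ) * h5 + (1/2:ℚ) * h7)
    · linear_combination (-1:ℚ) * h1 + (1:ℚ) * h3 + (-1/2:ℚ) * h4 + (-1/2:ℚ) * h6 + (1/2:ℚ) * h7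
    · linear_combination (-1:ℚ) * h1 + (1:ℚ) * h3 + (-1/2:ℚ) * h4 + (-1/2:ℚ) * h6 + (1/2:ℚ) * h7
    · linear_combination -((1:ℚ) * h1 + (-1:ℚ) * h2 + (-1/2:ℚ) * h5 + (1/2:ℚ) * h6 + (-1/2:ℚ) * h7)
    · linear_combination (2:ℚ) * h1 + (-1:ℚ) * h3 + (1/2:ℚ) * h4 + (-1/2:ℚ) * h5 + (1/2:ℚ) * h6 + (-1:ℚ) * h7
    · linear_combination (2:ℚ) * h1 + (-1:ℚ) * h3 + (1/2:ℚ) * h4 + (-1/2:ℚ) * h5 + (1/2:ℚ) * h6 + (-1:ℚ) * h7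
end
end
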